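/- Define a_n := t_{n−1}, aᵢ := uᵢ·sᵢ·uᵢ⁻¹ for 2 ≤ i ≤ n−1, and a₁ := u₁·s₁. Then a_n·a_{n−1}·a_{n−2} ⋯ a₂·a₁ = g_{n−1}·g_{n−2}⁻¹·g_{n−3}·g_{n−4}⁻¹ ⋯ g₃·g₂⁻¹·g₁. In particular, a_n·a_{n−1} ⋯ a₁ = 1 if and only if g_{n−1}·g_{n−2}⁻¹·g_{n−3} ⋯ g₂⁻¹·g₁ = 1. -/

import Mathlib

/-!
Put `V i = t i * t (i + 1) * ⋯ * t (n - 2)` and `f i = g i` for odd `i`, `f i = (g i)⁻¹` for even `i`.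
Since the `t i` are involutions, reversing a product of them inverts it, so `u i = (V (i + 1))⁻¹`
for even `i` and `u i = (V i)⁻¹` for odd `i`. In both cases `V (i + 1) * a i = f i * V i`
(for even `i` because `s i` is an involution, for odd `i` because `t i` is one), so the middle
factors telescope: `V (n - 1) * a (n - 2) * ⋯ * a 2 = f (n - 2) * ⋯ * f 2 * V 2` with `V (n - 1) = 1`.
The ends close up because `a n * a (n - 1) = g (n - 1)` and `V 2 * a 1 = g 1`.
-/

section

variable {G : Type*} [Group G]

namespace List

theorem prod_map_reverse_range'_succ (f : ℕ → G) (k m : ℕ) :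
    ((range' k (m + 1)).reverse.map f).prod = f (k + m) * ((range' k m).reverse.map f).prod := by
  simp [range'_1_concat]

theorem prod_map_reverse_range'_succ' (f : ℕ → G) (k m : ℕ) :
    ((range' k (m + 1)).reverse.map f).prod = ((range' (k + 1) m).reverse.map f).prod * f k := by
  simp [range'_succ]

theorem prod_map_reverse_of_inv_eq {α : Type*} {t : α → G} (L : List α)
    (ht : ∀ x ∈ L, (t x)⁻¹ = t x) : (L.reverse.map t).prod = (L.map t).prod⁻¹ := by
  rw [prod_inv_reverse, map_map, ← map_reverse]
  exact congrArg prod (map_congr_left fun x hx => (ht x (mem_reverse.mp hx)).symm)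

theorem mul_prod_map_reverse_range'_eq_prod_mul {X a b : ℕ → G} (k m : ℕ)
    (h : ∀ i, k ≤ i → i < k + m → X (i + 1) * a i = b i * X i) :
    X (k + m) * ((range' k m).reverse.map a).prod = ((range' k m).reverse.map b).prod * X k := by
  induction m with
  | zero => simp
  | succ m ih =>
    rw [prod_map_reverse_range'_succ, prod_map_reverse_range'_succ, ← add_assoc, ← mul_assoc,
      h (k + m) (by omega) (by omega), mul_assoc, ih fun i hi _ => h i hi (by omega), mul_assoc]

end List

def tailProd (t : ℕ → G) (n i : ℕ) : G := ((List.range' i (n - 1 - i)).map t).prod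

def uFormula (t : ℕ → G) (n i : ℕ) : G :=
  if i % 2 = 0 then ((List.range' (i + 1) (n - 2 - i)).reverse.map t).prod
  else ((List.range' i (n - 1 - i)).reverse.map t).prod

variable {n i : ℕ} {t s u g a : ℕ → G}

theorem tailProd_sub_one : tailProd t n (n - 1) = 1 := by
  simp [tailProd]

theorem tailProd_eq_mul_tailProd_succ (h : i + 2 ≤ n) :
    tailProd t n i = t i * tailProd t n (i + 1) := by
  rw [tailProd, tailProd, show n - 1 - i = n - 1 - (i + 1) + 1 by omega, List.range'_succ]
  simp

theorem prod_map_reverse_range'_eq_inv_tailProd (ht : ∀ j, 1 ≤ j → j ≤ n - 1 → t j * t j = 1)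
    (hi : 1 ≤ i) : ((List.range' i (n - 1 - i)).reverse.map t).prod = (tailProd t n i)⁻¹ :=
  List.prod_map_reverse_of_inv_eq _ fun j hj => by
    rw [List.mem_range'_1] at hj
    exact inv_eq_of_mul_eq_one_right (ht j (by omega) (by omega))

theorem uFormula_of_even (ht : ∀ j, 1 ≤ j → j ≤ n - 1 → t j * t j = 1) (hi : i % 2 = 0) :
    uFormula t n i = (tailProd t n (i + 1))⁻¹ := by
  rw [uFormula, if_pos hi, show n - 2 - i = n - 1 - (i + 1) by omega,
    prod_map_reverse_range'_eq_inv_tailProd ht (by omega)]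

theorem uFormula_of_odd (ht : ∀ j, 1 ≤ j → j ≤ n - 1 → t j * t j = 1) (hi : i % 2 = 1) :
    uFormula t n i = (tailProd t n i)⁻¹ := by
  rw [uFormula, if_neg (by omega), prod_map_reverse_range'_eq_inv_tailProd ht (by omega)]

theorem tailProd_succ_mul_eq_mul_tailProd (hEven : Even n)
    (ht : ∀ j, 1 ≤ j → j ≤ n - 1 → t j * t j = 1)
    (hs : ∀ j, 1 ≤ j → j ≤ n - 1 → s j * s j = 1) (hun2 : u (n - 2) = 1)
    (hui : ∀ j, 1 ≤ j → j ≤ n - 3 → u j = uFormula t n j)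
    (hg : ∀ j, 1 ≤ j → j ≤ n - 1 → g j = t j * s j)
    (hai : ∀ j, 2 ≤ j → j ≤ n - 1 → a j = u j * s j * (u j)⁻¹) (h2i : 2 ≤ i) (hin : i ≤ n - 2) :
    tailProd t n (i + 1) * a i = (if i % 2 = 0 then (g i)⁻¹ else g i) * tailProd t n i := by
  rw [hai i h2i (by omega), hg i (by omega) (by omega),
    tailProd_eq_mul_tailProd_succ (show i + 2 ≤ n by omega)]
  rcases Nat.mod_two_eq_zero_or_one i with hi | hi
  · have hu : u i = (tailProd t n (i + 1))⁻¹ := by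
      rcases (show i = n - 2 ∨ i ≤ n - 3 by omega) with rfl | hin
      · rw [hun2, show n - 2 + 1 = n - 1 by omega, tailProd_sub_one, inv_one]
      · rw [hui i (by omega) hin, uFormula_of_even ht hi]
    rw [hu, if_pos hi, mul_inv_rev, inv_eq_of_mul_eq_one_right (hs i (by omega) (by omega))]
    group
  · have hin : i ≤ n - 3 := by obtain ⟨k, rfl⟩ := hEven; omega
    rw [hui i (by omega) hin, uFormula_of_odd ht hi,
      tailProd_eq_mul_tailProd_succ (show i + 2 ≤ n by omega), if_neg (by omega), inv_inv,
      mul_inv_rev, inv_eq_of_mul_eq_one_right (ht i (by omega) (by omega))]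
    group

end

theorem a_product_eq_alternating_g_product_general {G : Type*} [Group G] (n : ℕ) (hn : 6 ≤ n)
    (hEven : Even n) (t s u g a : ℕ → G)
    (ht : ∀ i, 1 ≤ i → i ≤ n - 1 → t i * t i = 1)
    (hs : ∀ i, 1 ≤ i → i ≤ n - 1 → s i * s i = 1)
    (hun1 : u (n - 1) = 1) (hun2 : u (n - 2) = 1)
    (hui : ∀ i, 1 ≤ i → i ≤ n - 3 →
      u i = if i % 2 = 0 then ((List.range' (i + 1) (n - 2 - i)).reverse.map t).prod
        else ((List.range' i (n - 1 - i)).reverse.map t).prod)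
    (hg : ∀ i, 1 ≤ i → i ≤ n - 1 → g i = t i * s i)
    (han : a n = t (n - 1))
    (hai : ∀ i, 2 ≤ i → i ≤ n - 1 → a i = u i * s i * (u i)⁻¹)
    (ha1 : a 1 = u 1 * s 1) :
    ((List.range' 1 n).reverse.map a).prod =
      ((List.range' 1 (n - 1)).reverse.map
        (fun i => if i % 2 = 0 then (g i)⁻¹ else g i)).prod ∧
    (((List.range' 1 n).reverse.map a).prod = 1 ↔
      ((List.range' 1 (n - 1)).reverse.map
        (fun i => if i % 2 = 0 then (g i)⁻¹ else g i)).prod = 1) := by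
  set f : ℕ → G := fun i => if i % 2 = 0 then (g i)⁻¹ else g i
  have hmid := List.mul_prod_map_reverse_range'_eq_prod_mul (X := tailProd t n) (a := a) (b := f)
    2 (n - 3) fun i h2i hin =>
      tailProd_succ_mul_eq_mul_tailProd hEven ht hs hun2 hui hg hai h2i (by omega)
  rw [show 2 + (n - 3) = n - 1 by omega, tailProd_sub_one, one_mul] at hmid
  have htop : a n * a (n - 1) = f (n - 1) := by
    rw [han, hai (n - 1) (by omega) le_rfl, hun1, inv_one, one_mul, mul_one,
      ← hg (n - 1) (by omega) le_rfl]
    simp [f, show (n - 1) % 2 = 1 by obtain ⟨k, rfl⟩ := hEven; omega]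
  have hbot : tailProd t n 2 * a 1 = f 1 := by
    rw [ha1, (hui 1 le_rfl (by omega)).trans (uFormula_of_odd ht rfl),
      tailProd_eq_mul_tailProd_succ (i := 1) (by omega), mul_inv_rev,
      inv_eq_of_mul_eq_one_right (ht 1 le_rfl (by omega))]
    simp [f, hg 1 le_rfl (by omega), mul_assoc]
  have key : ((List.range' 1 n).reverse.map a).prod =
      ((List.range' 1 (n - 1)).reverse.map f).prod := by
    obtain ⟨m, rfl⟩ : ∃ m, n = m + 3 := ⟨n - 3, by omega⟩
    rw [show m + 3 - 1 = m + 2 by omega] at htop ⊢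
    rw [show m + 3 - 3 = m by omega] at hmid
    rw [List.prod_map_reverse_range'_succ, List.prod_map_reverse_range'_succ,
      List.prod_map_reverse_range'_succ', List.prod_map_reverse_range'_succ,
      List.prod_map_reverse_range'_succ', show 1 + (m + 2) = m + 3 by omega,
      show 1 + (m + 1) = m + 2 by omega, ← htop, ← hbot, hmid]
    simp only [mul_assoc]
  exact ⟨key, by rw [key]⟩

/-- Let `n ≥ 6` be even, `G` a group, `t 1, …, t (n-1)` and
`s 1, …, s (n-1)` involutions with `t 1 = t (n-1)`, let `u` be as in the paper
(`u n = u (n-1) = u (n-2) = 1`; for `1 ≤ i ≤ n-3`, `u i = t (n-2) ⋯ t (i+1)` for even `i`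
and `u i = t (n-2) ⋯ t (i+1) * t i` for odd `i`), and set `g i = t i * s i`.
Define `a n = t (n-1)`, `a i = u i * s i * (u i)⁻¹` for `2 ≤ i ≤ n-1`, `a 1 = u 1 * s 1`.
Then `a n * a (n-1) * ⋯ * a 1 = g (n-1) * (g (n-2))⁻¹ * g (n-3) * ⋯ * (g 2)⁻¹ * g 1`;
in particular the left product is `1` iff the right product is `1`. -/
theorem a_product_eq_alternating_g_product {G : Type*} [Group G] (n : ℕ) (hn : 6 ≤ n)
    (hEven : Even n) (t s u g a : ℕ → G)
    (ht : ∀ i, 1 ≤ i → i ≤ n - 1 → t i * t i = 1)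
    (ht1 : t 1 = t (n - 1))
    (hs : ∀ i, 1 ≤ i → i ≤ n - 1 → s i * s i = 1)
    (hun : u n = 1) (hun1 : u (n - 1) = 1) (hun2 : u (n - 2) = 1)
    (hui : ∀ i, 1 ≤ i → i ≤ n - 3 →
      u i = if i % 2 = 0 then ((List.range' (i + 1) (n - 2 - i)).reverse.map t).prod
        else ((List.range' i (n - 1 - i)).reverse.map t).prod)
    (hg : ∀ i, 1 ≤ i → i ≤ n - 1 → g i = t i * s i)
    (han : a n = t (n - 1))
    (hai : ∀ i, 2 ≤ i → i ≤ n - 1 → a i = u i * s i * (u i)⁻¹)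
    (ha1 : a 1 = u 1 * s 1) :
    ((List.range' 1 n).reverse.map a).prod =
      ((List.range' 1 (n - 1)).reverse.map
        (fun i => if i % 2 = 0 then (g i)⁻¹ else g i)).prod ∧
    (((List.range' 1 n).reverse.map a).prod = 1 ↔
      ((List.range' 1 (n - 1)).reverse.map
        (fun i => if i % 2 = 0 then (g i)⁻¹ else g i)).prod = 1) :=
  a_product_eq_alternating_g_product_general n hn hEven t s u g a ht hs hun1 hun2 hui hg han hai ha1
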